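/- Let r₊ = 1 + |{i ∈ I : s_i ≥ s₊}| with s₊ ≥ 0. Then -log(1/r₊) ≤ ℓ_BCE whenever |Γ₀| log 2 ≥ log r₊, where Γ₀ = {i ∈ I : s_i ≥ 0}; i.e., if 2^{|Γ₀|} ≥ r₊ then -log MRR(r₊) ≤ ℓ_BCE. -/

import Mathlib

/-! Each softplus term `log (1 + exp x)` is nonnegative, and at least `log 2` when `x ≥ 0`.
Hence the BCE loss is at least `|Γ₀| log 2`, which by hypothesis dominates `log r₊ = -log (1 / r₊)`. -/

open Real Finset

lemma log_one_add_exp_nonneg (x : ℝ) : 0 ≤ log (1 + exp x) :=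
  log_nonneg (by linarith [exp_pos x])

lemma log_two_le_log_one_add_exp {x : ℝ} (hx : 0 ≤ x) : log 2 ≤ log (1 + exp x) :=
  log_le_log two_pos (by linarith [one_le_exp hx])

lemma card_filter_nonneg_mul_log_two_le_sum_log_one_add_exp {ι : Type*} (I : Finset ι)
    (s : ι → ℝ) :
    (#(I.filter fun i => 0 ≤ s i) : ℝ) * log 2 ≤ ∑ i ∈ I, log (1 + exp (s i)) :=
  calc (#(I.filter fun i => 0 ≤ s i) : ℝ) * log 2
      = ∑ _i ∈ I.filter fun i => 0 ≤ s i, log 2 := by rw [sum_const, nsmul_eq_mul]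
    _ ≤ ∑ i ∈ I.filter fun i => 0 ≤ s i, log (1 + exp (s i)) :=
        sum_le_sum fun i hi => log_two_le_log_one_add_exp (mem_filter.mp hi).2
    _ ≤ ∑ i ∈ I, log (1 + exp (s i)) :=
        sum_le_sum_of_subset_of_nonneg (filter_subset _ _)
          fun i _ _ => log_one_add_exp_nonneg (s i)

theorem stmt_19_general {ι : Type*} (I : Finset ι) (s : ι → ℝ) (spos : ℝ)
    (rpos : ℕ)
    (hb : Real.log (rpos : ℝ) ≤ ((I.filter (fun i => (0 : ℝ) ≤ s i)).card : ℝ) * Real.log 2) :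
    -Real.log (1 / (rpos : ℝ)) ≤
      Real.log (1 + Real.exp (-spos)) + ∑ i ∈ I, Real.log (1 + Real.exp (s i)) := by
  rw [one_div, log_inv, neg_neg]
  linarith [card_filter_nonneg_mul_log_two_le_sum_log_one_add_exp I s,
    log_one_add_exp_nonneg (-spos)]

theorem stmt_19 {ι : Type*} (I : Finset ι) (s : ι → ℝ) (spos : ℝ) (hpos : 0 ≤ spos)
    (rpos : ℕ) (hr : rpos = 1 + (I.filter (fun i => spos ≤ s i)).card)
    (hb : Real.log (rpos : ℝ) ≤ ((I.filter (fun i => (0 : ℝ) ≤ s i)).card : ℝ) * Real.log 2) :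
    -Real.log (1 / (rpos : ℝ)) ≤
      Real.log (1 + Real.exp (-spos)) + ∑ i ∈ I, Real.log (1 + Real.exp (s i)) :=
  stmt_19_general I s spos rpos hb
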